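/- Let R be a finite binary relation and let J = {(a,b,c) : (a,b)∈R, (c,b)∈R} be the full 2-path self-join and T = {(a,c) : ∃b, (a,b)∈R ∧ (c,b)∈R} its projection. Then |J| ≤ |R| · √|T|. -/

import Mathlib

/-!
Group the join by the shared middle value `b`, with `d b` elements of `R` ending in `b`. Then
`|J| = ∑_{r ∈ R} d r.2`, and all `d b ^ 2` pairs `(a, c)` of elements ending in `b` lie in `T`, so
`d b ≤ √|T|` for every `b` and `|J| ≤ |R| · √|T|`.
-/

open Finset

namespace Finset

variable {α β : Type*} [DecidableEq β]

def twoPathJoin (R : Finset (α × β)) : Finset ((α × β) × (α × β)) :=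
  (R ×ˢ R).filter (fun p => p.1.2 = p.2.2)

def twoPathProj [DecidableEq α] (R : Finset (α × β)) : Finset (α × α) :=
  (twoPathJoin R).image (fun p => (p.1.1, p.2.1))

theorem card_twoPathJoin (R : Finset (α × β)) :
    #(twoPathJoin R) = ∑ r ∈ R, #(R.filter (fun s => r.2 = s.2)) := by
  simp only [twoPathJoin, card_filter, sum_product]

theorem card_filter_snd_sq_le_card_twoPathProj [DecidableEq α] (R : Finset (α × β)) (b : β) :
    #(R.filter (fun s => b = s.2)) ^ 2 ≤ #(twoPathProj R) := by
  set F := R.filter (fun s => b = s.2)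
  rw [sq, ← card_product]
  refine card_le_card_of_injOn (fun p => (p.1.1, p.2.1)) ?_ ?_
  · rintro ⟨r, s⟩ hrs
    simp only [coe_product, Set.mem_prod, mem_coe, F, mem_filter] at hrs
    exact mem_image.mpr ⟨(r, s), mem_filter.mpr
      ⟨mem_product.mpr ⟨hrs.1.1, hrs.2.1⟩, hrs.1.2.symm.trans hrs.2.2⟩, rfl⟩
  · rintro ⟨r, s⟩ hrs ⟨r', s'⟩ hrs' h
    simp only [coe_product, Set.mem_prod, mem_coe, F, mem_filter] at hrs hrs'
    simp only [Prod.mk.injEq] at h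
    -- elements of `F` are determined by their first coordinate, the second one being `b`
    exact Prod.ext (Prod.ext h.1 (hrs.1.2.symm.trans hrs'.1.2))
      (Prod.ext h.2 (hrs.2.2.symm.trans hrs'.2.2))

theorem card_twoPathJoin_le [DecidableEq α] (R : Finset (α × β)) :
    (#(twoPathJoin R) : ℝ) ≤ #R * √(#(twoPathProj R) : ℝ) := by
  have hfiber : ∀ r ∈ R, (#(R.filter (fun s => r.2 = s.2)) : ℝ) ≤ √(#(twoPathProj R) : ℝ) :=
    fun r _ => Real.le_sqrt_of_sq_le (mod_cast card_filter_snd_sq_le_card_twoPathProj R r.2)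
  calc (#(twoPathJoin R) : ℝ) = ∑ r ∈ R, (#(R.filter (fun s => r.2 = s.2)) : ℝ) := by
        rw [card_twoPathJoin]; push_cast; rfl
    _ ≤ ∑ _r ∈ R, √(#(twoPathProj R) : ℝ) := sum_le_sum hfiber
    _ = #R * √(#(twoPathProj R) : ℝ) := by rw [sum_const, nsmul_eq_mul]

end Finset

/-- For the 2-path self-join, the full join size is at most `|R| · √|T|`,
where `T` is the projected output. -/
theorem stmt_10 {α : Type*} [DecidableEq α] (R : Finset (α × α))
    (J : Finset ((α × α) × (α × α)))
    (hJ : J = (R ×ˢ R).filter (fun p => p.1.2 = p.2.2))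
    (T : Finset (α × α)) (hT : T = J.image (fun p => (p.1.1, p.2.1))) :
    (J.card : ℝ) ≤ (R.card : ℝ) * Real.sqrt T.card := by
  subst hJ hT
  exact card_twoPathJoin_le R
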